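/- arXiv:1905.08311 — 2 statements merged into one kernel-verified Lean document; each statement's English description precedes it below -/
import Mathlib

section
/- Let x, y, n be natural numbers, N = x + y + n, and let U, D, U', D' be subsets of [N] with U ∪ D = U' ∪ D', |U ∪ D| = n, and U ∩ D = U' ∩ D'. Let B₁ and B₂ be two subsets of [N]∖(U∪D) with |B₁| ≤ x and |B₂| ≤ x. Then (∑_{S ⊆ [N]∖(U∪D∪B₁), |S| = y} Δ(U∪S)·Δ(D∪S)) · (∑_{S ⊆ [N]∖(U∪D∪B₂), |S| = y} Δ(U'∪S)·Δ(D'∪S)) = (∑_{S ⊆ [N]∖(U∪D∪B₁), |S| = y} Δ(U'∪S)·Δ(D'∪S)) · (∑_{S ⊆ [N]∖(U∪D∪B₂), |S| = y} Δ(U∪S)·Δ(D∪S)), where each sum ranges over y-element subsets S of the indicated set. (This expresses the surprising fact from the Generalized Shuffling Theorem that the ratio of barrier-compatible tiling numbers of H_{x,y}(U;D;B) and H_{x,y}(U';D';B) does not depend on the barrier set B.) -/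
open Finset

/-- Vandermonde product `Δ(T) = ∏_{i<j in T} (t_j - t_i)` of a finite set of naturals. -/
def vdm (T : Finset ℕ) : ℤ :=
  ∏ p ∈ (T ×ˢ T).filter (fun p => p.1 < p.2), ((p.2 : ℤ) - (p.1 : ℤ))

noncomputable def cross (T S : Finset ℕ) : ℤ := ∏ p ∈ T ×ˢ S, |(p.2 : ℤ) - (p.1 : ℤ)|

lemma cross_eq (T S : Finset ℕ) (h : Disjoint T S) :
    cross T S
      = (∏ p ∈ (T ×ˢ S).filter (fun p => p.1 < p.2), ((p.2:ℤ)-(p.1:ℤ)))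
      * (∏ p ∈ (S ×ˢ T).filter (fun p => p.1 < p.2), ((p.2:ℤ)-(p.1:ℤ))) := by
  rw [cross, ← Finset.prod_filter_mul_prod_filter_not (T ×ˢ S) (fun p => p.1 < p.2)]
  congr 1
  · apply Finset.prod_congr rfl
    intro p hp
    simp only [mem_filter] at hp
    have : (p.1 : ℤ) < p.2 := by exact_mod_cast hp.2
    exact abs_of_nonneg (by linarith)
  · refine Finset.prod_nbij' Prod.swap Prod.swap ?_ ?_ ?_ ?_ ?_
    · intro p hp
      simp only [mem_filter, mem_product, Prod.fst_swap, Prod.snd_swap] at hp ⊢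
      have hne : p.1 ≠ p.2 := fun he =>
        Finset.disjoint_left.1 h hp.1.1 (he ▸ hp.1.2)
      exact ⟨⟨hp.1.2, hp.1.1⟩, by omega⟩
    · intro p hp
      simp only [mem_filter, mem_product, Prod.fst_swap, Prod.snd_swap] at hp ⊢
      exact ⟨⟨hp.1.2, hp.1.1⟩, by omega⟩
    · intro p _; rfl
    · intro p _; rfl
    · intro p hp
      simp only [mem_filter, mem_product] at hp
      have hne : p.1 ≠ p.2 := fun he =>
        Finset.disjoint_left.1 h hp.1.1 (he ▸ hp.1.2)
      have h2 : (p.2 : ℕ) < p.1 := by omega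
      have : (p.2 : ℤ) < p.1 := by exact_mod_cast h2
      simp only [Prod.fst_swap, Prod.snd_swap]
      rw [abs_of_nonpos (by linarith : (p.2:ℤ) - p.1 ≤ 0)]
      ring

lemma vdm_union (T S : Finset ℕ) (h : Disjoint T S) :
    vdm (T ∪ S) = vdm T * vdm S * cross T S := by
  classical
  have hsplit : (T ∪ S) ×ˢ (T ∪ S) = (T ×ˢ T ∪ S ×ˢ S) ∪ (T ×ˢ S ∪ S ×ˢ T) := by
    ext p
    simp only [mem_product, mem_union]
    tauto
  have dTT_SS : Disjoint ((T ×ˢ T).filter (fun p : ℕ × ℕ => p.1 < p.2))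
      ((S ×ˢ S).filter (fun p => p.1 < p.2)) := by
    refine Finset.disjoint_left.2 fun p hp hp' => ?_
    simp only [mem_filter, mem_product] at hp hp'
    exact Finset.disjoint_left.1 h hp.1.1 hp'.1.1
  have dTS_ST : Disjoint ((T ×ˢ S).filter (fun p : ℕ × ℕ => p.1 < p.2))
      ((S ×ˢ T).filter (fun p => p.1 < p.2)) := by
    refine Finset.disjoint_left.2 fun p hp hp' => ?_
    simp only [mem_filter, mem_product] at hp hp'
    exact Finset.disjoint_left.1 h hp.1.1 hp'.1.1
  have dBig : Disjoint
      (((T ×ˢ T) ∪ (S ×ˢ S)).filter (fun p : ℕ × ℕ => p.1 < p.2))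
      (((T ×ˢ S) ∪ (S ×ˢ T)).filter (fun p => p.1 < p.2)) := by
    refine Finset.disjoint_left.2 fun p hp hp' => ?_
    simp only [mem_filter, mem_product, mem_union] at hp hp'
    rcases hp.1 with h1 | h1 <;> rcases hp'.1 with h2 | h2
    · exact Finset.disjoint_left.1 h h1.2 h2.2
    · exact Finset.disjoint_left.1 h h1.1 h2.1
    · exact Finset.disjoint_left.1 h h2.1 h1.1
    · exact Finset.disjoint_left.1 h h2.2 h1.2
  rw [vdm, hsplit, filter_union, Finset.prod_union dBig, filter_union, filter_union,
    Finset.prod_union dTT_SS, Finset.prod_union dTS_ST, cross_eq T S h, vdm, vdm]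

lemma cross_as_prod (T S : Finset ℕ) :
    cross T S = ∏ t ∈ T, ∏ s ∈ S, |(s : ℤ) - (t : ℤ)| := by
  rw [cross, Finset.prod_product]

lemma vdm_pos (T : Finset ℕ) : 0 < vdm T := by
  apply Finset.prod_pos
  intro p hp
  simp only [mem_filter] at hp
  have : (p.1 : ℤ) < p.2 := by exact_mod_cast hp.2
  linarith

/-- The ratio of barrier-compatible tiling numbers of `H_{x,y}(U;D;B)` and
`H_{x,y}(U';D';B)` does not depend on the barrier set `B`. -/
theorem barrier_independence (x y n N : ℕ) (hN : N = x + y + n)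
    (U D U' D' B₁ B₂ : Finset ℕ)
    (hU : U ⊆ Finset.Icc 1 N) (hD : D ⊆ Finset.Icc 1 N)
    (hU' : U' ⊆ Finset.Icc 1 N) (hD' : D' ⊆ Finset.Icc 1 N)
    (hcup : U ∪ D = U' ∪ D') (hn : (U ∪ D).card = n) (hcap : U ∩ D = U' ∩ D')
    (hB₁ : B₁ ⊆ Finset.Icc 1 N \ (U ∪ D)) (hB₁x : B₁.card ≤ x)
    (hB₂ : B₂ ⊆ Finset.Icc 1 N \ (U ∪ D)) (hB₂x : B₂.card ≤ x) :
    (∑ S ∈ (Finset.Icc 1 N \ (U ∪ D ∪ B₁)).powersetCard y, vdm (U ∪ S) * vdm (D ∪ S)) *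
        (∑ S ∈ (Finset.Icc 1 N \ (U ∪ D ∪ B₂)).powersetCard y, vdm (U' ∪ S) * vdm (D' ∪ S))
      = (∑ S ∈ (Finset.Icc 1 N \ (U ∪ D ∪ B₁)).powersetCard y, vdm (U' ∪ S) * vdm (D' ∪ S)) *
        (∑ S ∈ (Finset.Icc 1 N \ (U ∪ D ∪ B₂)).powersetCard y, vdm (U ∪ S) * vdm (D ∪ S)) := by
  have key : ∀ S : Finset ℕ, Disjoint (U ∪ D) S →
      vdm (U ∪ S) * vdm (D ∪ S) * (vdm U' * vdm D')
        = vdm (U' ∪ S) * vdm (D' ∪ S) * (vdm U * vdm D) := by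
    intro S hS
    have hdU : Disjoint U S := hS.mono_left Finset.subset_union_left
    have hdD : Disjoint D S := hS.mono_left Finset.subset_union_right
    have hS' : Disjoint (U' ∪ D') S := hcup ▸ hS
    have hdU' : Disjoint U' S := hS'.mono_left Finset.subset_union_left
    have hdD' : Disjoint D' S := hS'.mono_left Finset.subset_union_right
    rw [vdm_union U S hdU, vdm_union D S hdD, vdm_union U' S hdU', vdm_union D' S hdD']
    have hc : cross U S * cross D S = cross U' S * cross D' S := by
      have h1 : ∀ (A B : Finset ℕ), cross A S * cross B S
          = cross (A ∪ B) S * cross (A ∩ B) S := by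
        intro A B
        simp only [cross_as_prod]
        rw [← Finset.prod_union_inter]
      rw [h1 U D, h1 U' D', hcup, hcap]
    linear_combination (vdm U * vdm D * vdm U' * vdm D' * vdm S * vdm S) * hc
  have hsub : ∀ (B S : Finset ℕ),
      S ∈ (Finset.Icc 1 N \ (U ∪ D ∪ B)).powersetCard y → Disjoint (U ∪ D) S := by
    intro B S hSm
    have hSsub := (Finset.mem_powersetCard.1 hSm).1
    refine Finset.disjoint_right.2 fun a haS haUD => ?_
    have := hSsub haS
    simp only [Finset.mem_sdiff, Finset.mem_union] at this
    rcases Finset.mem_union.1 haUD with h | h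
    · exact this.2 (Or.inl (Or.inl h))
    · exact this.2 (Or.inl (Or.inr h))
  set c := vdm U * vdm D with hcdef
  set c' := vdm U' * vdm D' with hc'def
  have e1 : (∑ S ∈ (Finset.Icc 1 N \ (U ∪ D ∪ B₁)).powersetCard y, vdm (U ∪ S) * vdm (D ∪ S)) * c'
      = (∑ S ∈ (Finset.Icc 1 N \ (U ∪ D ∪ B₁)).powersetCard y, vdm (U' ∪ S) * vdm (D' ∪ S)) * c := by
    rw [Finset.sum_mul, Finset.sum_mul]
    exact Finset.sum_congr rfl fun S hS => key S (hsub B₁ S hS)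
  have e2 : (∑ S ∈ (Finset.Icc 1 N \ (U ∪ D ∪ B₂)).powersetCard y, vdm (U ∪ S) * vdm (D ∪ S)) * c'
      = (∑ S ∈ (Finset.Icc 1 N \ (U ∪ D ∪ B₂)).powersetCard y, vdm (U' ∪ S) * vdm (D' ∪ S)) * c := by
    rw [Finset.sum_mul, Finset.sum_mul]
    exact Finset.sum_congr rfl fun S hS => key S (hsub B₂ S hS)
  have hcc' : c * c' ≠ 0 :=
    ne_of_gt (mul_pos (mul_pos (vdm_pos U) (vdm_pos D)) (mul_pos (vdm_pos U') (vdm_pos D')))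
  apply mul_right_cancel₀ hcc'
  linear_combination
    ((∑ S ∈ (Finset.Icc 1 N \ (U ∪ D ∪ B₂)).powersetCard y, vdm (U' ∪ S) * vdm (D' ∪ S)) * c) * e1
    - ((∑ S ∈ (Finset.Icc 1 N \ (U ∪ D ∪ B₁)).powersetCard y, vdm (U' ∪ S) * vdm (D' ∪ S)) * c) * e2
end

section
/- Let k ≥ 1, let f_1, ..., f_k be natural numbers, let d_1, ..., d_{k−1} be positive integers, and for each i let U_i, U'_i ⊆ [f_i] with |U_i| = |U'_i|. For a positive integer N define offsets o_1(N) := 0 and o_{i+1}(N) := o_i(N) + f_i + N·d_i, and set U(N) := ⋃_{i=1}^{k} (o_i(N) + U_i) and U'(N) := ⋃_{i=1}^{k} (o_i(N) + U'_i). Then the real sequence Δ(U(N))/Δ(U'(N)) converges, as N → ∞, to ∏_{i=1}^{k} Δ(U_i)/Δ(U'_i). (This is the key computation in the proof of the asymptotic shuffling corollary: cross-cluster difference factors |a^{(i)}_p − a^{(j)}_q|/|e^{(i)}_p − e^{(j)}_q| tend to 1 as the gaps grow, so only within-cluster Vandermonde factors survive in the limit.) -/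
open Finset

/-- The offset of the `i`-th cluster (0-indexed): `o_{i+1}(N) = o_i(N) + f_i + N·d_i`. -/
def offs (f g : ℕ → ℕ) (N i : ℕ) : ℕ := ∑ j ∈ Finset.range i, (f j + N * g j)

/-- The global position set `⋃_{i<k} (o_i(N) + A_i)`. -/
def glob (k : ℕ) (f g : ℕ → ℕ) (N : ℕ) (A : ℕ → Finset ℕ) : Finset ℕ :=
  (Finset.range k).biUnion (fun i => (A i).image (fun t => offs f g N i + t))

lemma vdm_eq (T : Finset ℕ) :
    vdm T = ∏ x ∈ T, ∏ y ∈ T, if x < y then ((y : ℤ) - (x : ℤ)) else 1 := by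
  rw [vdm, Finset.prod_filter, Finset.prod_product]

lemma offs_split (f g : ℕ → ℕ) (N : ℕ) {i j : ℕ} (hij : i ≤ j) :
    offs f g N j = offs f g N i + ∑ l ∈ Finset.Ico i j, (f l + N * g l) := by
  simp only [offs, Finset.range_eq_Ico]
  exact (Finset.sum_Ico_consecutive _ (Nat.zero_le i) hij).symm

lemma offs_gap {k : ℕ} (f g : ℕ → ℕ) (hg : ∀ l < k - 1, 0 < g l) {N i j : ℕ}
    (hN : 1 ≤ N) (hij : i < j) (hj : j < k) :
    offs f g N i + f i + N ≤ offs f g N j := by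
  rw [offs_split f g N (le_of_lt hij)]
  have hi : i ∈ Finset.Ico i j := by simp [hij]
  have h1 : f i + N * g i ≤ ∑ l ∈ Finset.Ico i j, (f l + N * g l) :=
    Finset.single_le_sum (f := fun l => f l + N * g l) (fun l _ => Nat.zero_le _) hi
  have hgi : 1 ≤ g i := hg i (by omega)
  have : N ≤ N * g i := Nat.le_mul_of_pos_right N hgi
  omega

lemma offs_order {k : ℕ} (f g : ℕ → ℕ) (hg : ∀ l < k - 1, 0 < g l) {N i j p q : ℕ}
    (hN : 1 ≤ N) (hi : i < k) (hj : j < k)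
    (hp : p ∈ Finset.Icc 1 (f i)) (hq : q ∈ Finset.Icc 1 (f j)) :
    offs f g N i + p < offs f g N j + q ↔ (i < j ∨ (i = j ∧ p < q)) := by
  simp only [Finset.mem_Icc] at hp hq
  rcases lt_trichotomy i j with h | h | h
  · have := offs_gap f g hg hN h hj
    constructor
    · intro; left; exact h
    · intro; omega
  · subst h
    constructor
    · intro hlt; right; exact ⟨rfl, by omega⟩
    · rintro (h | ⟨-, h⟩); · omega
      · omega
  · have := offs_gap f g hg hN h hi
    constructor
    · intro; omega
    · rintro (h' | ⟨h', -⟩) <;> omega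

lemma prod_glob {k : ℕ} (f g : ℕ → ℕ) (hg : ∀ l < k - 1, 0 < g l) {N : ℕ}
    (hN : 1 ≤ N) (A : ℕ → Finset ℕ) (hA : ∀ i < k, A i ⊆ Finset.Icc 1 (f i))
    (F : ℕ → ℤ) :
    ∏ x ∈ glob k f g N A, F x
      = ∏ i ∈ Finset.range k, ∏ p ∈ A i, F (offs f g N i + p) := by
  rw [glob, Finset.prod_biUnion]
  · exact Finset.prod_congr rfl fun i hi =>
      Finset.prod_image (fun x _ y _ h => by omega)
  · intro i hi j hj hij
    simp only [Finset.mem_coe, Finset.mem_range] at hi hj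
    simp only [Finset.disjoint_left, Finset.mem_image]
    rintro a ⟨p, hp, rfl⟩ ⟨q, hq, heq⟩
    have hp' := hA i hi hp
    have hq' := hA j hj hq
    rcases lt_trichotomy i j with h | h | h
    · have := (offs_order f g hg hN hi hj hp' hq').2 (Or.inl h)
      omega
    · exact hij h
    · have := (offs_order f g hg hN hj hi hq' hp').2 (Or.inl h)
      omega

lemma decomp {k : ℕ} (f g : ℕ → ℕ) (hg : ∀ l < k - 1, 0 < g l) {N : ℕ}
    (hN : 1 ≤ N) (A : ℕ → Finset ℕ) (hA : ∀ i < k, A i ⊆ Finset.Icc 1 (f i)) :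
    vdm (glob k f g N A) = (∏ i ∈ Finset.range k, vdm (A i)) *
      ∏ i ∈ Finset.range k, ∏ j ∈ (Finset.range k).filter (fun j => i < j),
        ∏ p ∈ A i, ∏ q ∈ A j,
          (((offs f g N j + q : ℕ) : ℤ) - ((offs f g N i + p : ℕ) : ℤ)) := by
  rw [vdm_eq, prod_glob f g hg hN A hA]
  have step1 : ∀ i ∈ Finset.range k, ∀ p ∈ A i,
      ∏ y ∈ glob k f g N A, (if offs f g N i + p < y then ((y : ℤ) - ((offs f g N i + p : ℕ) : ℤ)) else 1)
      = ∏ j ∈ Finset.range k, ∏ q ∈ A j,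
          (if offs f g N i + p < offs f g N j + q then (((offs f g N j + q : ℕ) : ℤ) - ((offs f g N i + p : ℕ) : ℤ)) else 1) :=
    fun i _ p _ => prod_glob f g hg hN A hA _
  calc
    ∏ i ∈ Finset.range k, ∏ p ∈ A i, ∏ y ∈ glob k f g N A,
        (if offs f g N i + p < y then ((y : ℤ) - ((offs f g N i + p : ℕ) : ℤ)) else 1)
      = ∏ i ∈ Finset.range k, ∏ j ∈ Finset.range k, ∏ p ∈ A i, ∏ q ∈ A j,
          (if offs f g N i + p < offs f g N j + q then (((offs f g N j + q : ℕ) : ℤ) - ((offs f g N i + p : ℕ) : ℤ)) else 1) := by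
        refine Finset.prod_congr rfl fun i hi => ?_
        rw [Finset.prod_congr rfl (step1 i hi), Finset.prod_comm]
    _ = ∏ i ∈ Finset.range k, ∏ j ∈ Finset.range k,
          ((if i < j then ∏ p ∈ A i, ∏ q ∈ A j, (((offs f g N j + q : ℕ) : ℤ) - ((offs f g N i + p : ℕ) : ℤ)) else 1)
            * (if i = j then vdm (A i) else 1)) := by
        refine Finset.prod_congr rfl fun i hi => Finset.prod_congr rfl fun j hj => ?_
        simp only [Finset.mem_range] at hi hj
        rcases lt_trichotomy i j with h | h | h
        · rw [if_pos h, if_neg (by omega), mul_one]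
          refine Finset.prod_congr rfl fun p hp => Finset.prod_congr rfl fun q hq => ?_
          rw [if_pos ((offs_order f g hg hN hi hj (hA i hi hp) (hA j hj hq)).2 (Or.inl h))]
        · subst h
          rw [if_neg (lt_irrefl i), if_pos rfl, one_mul, vdm_eq]
          refine Finset.prod_congr rfl fun p hp => Finset.prod_congr rfl fun q hq => ?_
          rcases lt_or_ge p q with h' | h'
          · rw [if_pos ((offs_order f g hg hN hi hi (hA i hi hp) (hA i hi hq)).2 (Or.inr ⟨rfl, h'⟩)), if_pos h']
            push_cast; ring
          · rw [if_neg, if_neg (by omega)]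
            intro hc
            have := (offs_order f g hg hN hi hi (hA i hi hp) (hA i hi hq)).1 hc
            omega
        · rw [if_neg (by omega), if_neg (by omega), mul_one]
          refine Finset.prod_eq_one fun p hp => Finset.prod_eq_one fun q hq => ?_
          rw [if_neg]
          intro hc
          have := (offs_order f g hg hN hi hj (hA i hi hp) (hA j hj hq)).1 hc
          omega
    _ = (∏ i ∈ Finset.range k, vdm (A i)) *
          ∏ i ∈ Finset.range k, ∏ j ∈ (Finset.range k).filter (fun j => i < j),
            ∏ p ∈ A i, ∏ q ∈ A j,
              (((offs f g N j + q : ℕ) : ℤ) - ((offs f g N i + p : ℕ) : ℤ)) := by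
        rw [mul_comm, ← Finset.prod_mul_distrib]
        refine Finset.prod_congr rfl fun i hi => ?_
        rw [Finset.prod_mul_distrib, ← Finset.prod_filter, Finset.prod_ite_eq, if_pos hi]

open Filter

lemma div_div_same (a b c : ℝ) (hc : c ≠ 0) : a / c / (b / c) = a / b := by
  rcases eq_or_ne b 0 with rfl | hb
  · simp
  · field_simp

lemma factor_tendsto (f g : ℕ → ℕ) {i j : ℕ} (hij : i < j) (hgi : 0 < g i)
    (p q : ℕ) :
    Tendsto (fun N : ℕ =>
        (((offs f g N j + q : ℕ) : ℝ) - ((offs f g N i + p : ℕ) : ℝ)) /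
          ((N : ℝ) * (∑ l ∈ Finset.Ico i j, g l))) atTop (nhds 1) := by
  set Gn : ℕ := ∑ l ∈ Finset.Ico i j, g l with hGn
  set Fs : ℕ := ∑ l ∈ Finset.Ico i j, f l with hFs
  have hGpos : 0 < Gn := by
    refine Finset.sum_pos' (fun l _ => Nat.zero_le _) ⟨i, ?_, hgi⟩
    simp [hij]
  have hsplit : ∀ N : ℕ, offs f g N j = offs f g N i + (Fs + N * Gn) := by
    intro N
    rw [offs_split f g N hij.le, Finset.sum_add_distrib]
    simp [hGn, hFs, Finset.mul_sum]
  have heq : ∀ N : ℕ,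
      (((offs f g N j + q : ℕ) : ℝ) - ((offs f g N i + p : ℕ) : ℝ)) /
          ((N : ℝ) * Gn)
        = ((Fs : ℝ) + q - p + (N : ℝ) * Gn) / ((N : ℝ) * Gn) := by
    intro N
    rw [hsplit N]
    push_cast
    ring_nf
  simp only [heq]
  have htop : Tendsto (fun N : ℕ => (N : ℝ) * Gn) atTop atTop :=
    tendsto_natCast_atTop_atTop.atTop_mul_const (by positivity)
  have h0 : Tendsto (fun N : ℕ => ((Fs : ℝ) + q - p) / ((N : ℝ) * Gn)) atTop (nhds 0) :=
    Tendsto.div_atTop tendsto_const_nhds htop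
  have hev : ∀ᶠ N : ℕ in atTop,
      ((Fs : ℝ) + q - p + (N : ℝ) * Gn) / ((N : ℝ) * Gn)
        = ((Fs : ℝ) + q - p) / ((N : ℝ) * Gn) + 1 := by
    filter_upwards [eventually_ge_atTop 1] with N hN
    have hne : (N : ℝ) * Gn ≠ 0 := by positivity
    field_simp
  refine Tendsto.congr' (by filter_upwards [hev] with N h using h.symm) ?_
  simpa using h0.add tendsto_const_nhds

lemma half_tendsto (f g : ℕ → ℕ) {i j : ℕ} (hij : i < j) (hgi : 0 < g i)
    (P Q : Finset ℕ) :
    Tendsto (fun N : ℕ =>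
        (∏ p ∈ P, ∏ q ∈ Q, (((offs f g N j + q : ℕ) : ℝ) - ((offs f g N i + p : ℕ) : ℝ))) /
          ((N : ℝ) * (∑ l ∈ Finset.Ico i j, g l)) ^ (Q.card * P.card))
      atTop (nhds 1) := by
  have hrw : ∀ N : ℕ,
      (∏ p ∈ P, ∏ q ∈ Q, (((offs f g N j + q : ℕ) : ℝ) - ((offs f g N i + p : ℕ) : ℝ))) /
          ((N : ℝ) * (∑ l ∈ Finset.Ico i j, g l)) ^ (Q.card * P.card)
        = ∏ p ∈ P, ∏ q ∈ Q,
            ((((offs f g N j + q : ℕ) : ℝ) - ((offs f g N i + p : ℕ) : ℝ)) /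
              ((N : ℝ) * (∑ l ∈ Finset.Ico i j, g l))) := by
    intro N
    simp only [Finset.prod_div_distrib, Finset.prod_const]
    rw [pow_mul]
  simp only [hrw]
  have : (1:ℝ) = ∏ p ∈ P, ∏ q ∈ Q, (1:ℝ) := by simp
  rw [this]
  refine tendsto_finset_prod _ fun p _ => tendsto_finset_prod _ fun q _ => ?_
  exact factor_tendsto f g hij hgi p q

lemma cross_tendsto (f g : ℕ → ℕ) {i j : ℕ} (hij : i < j) (hgi : 0 < g i)
    (P Q P' Q' : Finset ℕ) (hP : P.card = P'.card) (hQ : Q.card = Q'.card) :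
    Tendsto (fun N : ℕ =>
        (∏ p ∈ P, ∏ q ∈ Q, (((offs f g N j + q : ℕ) : ℝ) - ((offs f g N i + p : ℕ) : ℝ))) /
        (∏ p ∈ P', ∏ q ∈ Q', (((offs f g N j + q : ℕ) : ℝ) - ((offs f g N i + p : ℕ) : ℝ))))
      atTop (nhds 1) := by
  have h1 := half_tendsto f g hij hgi P Q
  have h2 := half_tendsto f g hij hgi P' Q'
  rw [hP, hQ] at h1
  have h3 := h1.div h2 one_ne_zero
  rw [div_one] at h3
  refine Tendsto.congr' ?_ h3
  filter_upwards [eventually_ge_atTop 1] with N hN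
  have hGpos : 0 < ∑ l ∈ Finset.Ico i j, g l := by
    refine Finset.sum_pos' (fun l _ => Nat.zero_le _) ⟨i, ?_, hgi⟩
    simp [hij]
  have hc : ((N : ℝ) * (∑ l ∈ Finset.Ico i j, g l)) ^ (Q'.card * P'.card) ≠ 0 := by
    have h1 : (1:ℝ) ≤ (N:ℝ) := by exact_mod_cast hN
    positivity
  exact div_div_same _ _ _ hc

/-- As the gaps between clusters grow, only within-cluster Vandermonde factors survive:
`Δ(U(N))/Δ(U'(N)) → ∏_i Δ(U_i)/Δ(U'_i)`. -/
theorem vandermonde_cluster_limit (k : ℕ) (hk : 1 ≤ k) (f g : ℕ → ℕ)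
    (Uc Uc' : ℕ → Finset ℕ)
    (hg : ∀ i < k - 1, 0 < g i)
    (hU : ∀ i < k, Uc i ⊆ Finset.Icc 1 (f i))
    (hU' : ∀ i < k, Uc' i ⊆ Finset.Icc 1 (f i))
    (hcard : ∀ i < k, (Uc i).card = (Uc' i).card) :
    Filter.Tendsto (fun N : ℕ =>
      ((vdm (glob k f g N Uc) : ℤ) : ℝ) / ((vdm (glob k f g N Uc') : ℤ) : ℝ))
      Filter.atTop
      (nhds (∏ i ∈ Finset.range k, ((vdm (Uc i) : ℤ) : ℝ) / ((vdm (Uc' i) : ℤ) : ℝ))) := by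
  have hΦ : Tendsto (fun N : ℕ =>
      (∏ i ∈ Finset.range k, ((vdm (Uc i) : ℝ) / (vdm (Uc' i) : ℝ))) *
      ∏ i ∈ Finset.range k, ∏ j ∈ (Finset.range k).filter (fun j => i < j),
        ((∏ p ∈ Uc i, ∏ q ∈ Uc j, (((offs f g N j + q : ℕ) : ℝ) - ((offs f g N i + p : ℕ) : ℝ))) /
         (∏ p ∈ Uc' i, ∏ q ∈ Uc' j, (((offs f g N j + q : ℕ) : ℝ) - ((offs f g N i + p : ℕ) : ℝ))))) atTop
      (nhds ((∏ i ∈ Finset.range k, ((vdm (Uc i) : ℝ) / (vdm (Uc' i) : ℝ))) *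
        ∏ i ∈ Finset.range k, ∏ _j ∈ (Finset.range k).filter (fun j => i < j), (1 : ℝ))) := by
    refine tendsto_const_nhds.mul
      (tendsto_finset_prod _ fun i hi => tendsto_finset_prod _ fun j hj => ?_)
    simp only [Finset.mem_range] at hi
    simp only [Finset.mem_filter, Finset.mem_range] at hj
    exact cross_tendsto f g hj.2 (hg i (by omega)) _ _ _ _ (hcard i hi) (hcard j hj.1)
  simp only [Finset.prod_const_one, mul_one] at hΦ
  refine Tendsto.congr' ?_ hΦ
  filter_upwards [eventually_ge_atTop 1] with N hN
  rw [decomp (k := k) f g hg hN Uc hU, decomp (k := k) f g hg hN Uc' hU']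
  simp only [Int.cast_mul, Int.cast_prod, Int.cast_sub, Int.cast_natCast]
  rw [← div_mul_div_comm]
  congr 1
  · rw [Finset.prod_div_distrib]
  · simp only [Finset.prod_div_distrib]
end
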